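/- arXiv:1701.01194 — 3 statements merged into one kernel-verified Lean document; each statement's English description precedes it below -/
import Mathlib

section
/- The function φ(x) := 1/sinh²(x) − 1/x² is strictly increasing on (0, ∞). -/
/-!
Since `φ'(x) = 2/x³ - 2 cosh x / sinh³ x`, it suffices that `x³ cosh x < sinh³ x`, i.e.
`x < sinh x · cosh^(-1/3) x`. Both sides vanish at `0`, and with `u = cosh^(-1/3) x`, so that
`cosh x = u⁻³`, the derivative of the right-hand side is `(2u⁻² + u⁴)/3`, which exceeds `1` for
`x ≠ 0` by AM–GM applied to `u⁻², u⁻², u⁴`.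
-/

open Real Set

theorem three_mul_lt_mul_two_mul_sq_add_one {u c : ℝ} (hu₀ : 0 < u) (hu₁ : u < 1)
    (hc : u ^ 3 = c⁻¹) : 3 * c < u * (2 * c ^ 2 + 1) := by
  rw [← inv_inj, inv_inv] at hc
  subst hc
  field_simp
  nlinarith [mul_pos (pow_pos hu₀ 2) (pow_pos (sub_pos.2 (pow_lt_one₀ hu₀.le hu₁ two_ne_zero)) 2)]

theorem rpow_neg_one_third_pow_three {c : ℝ} (hc : 0 ≤ c) :
    (c ^ (-(1 / 3) : ℝ)) ^ 3 = c⁻¹ := by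
  rw [← rpow_natCast, ← rpow_mul hc]
  norm_num [rpow_neg_one]

theorem hasDerivAt_sinh_mul_cosh_rpow (x : ℝ) :
    HasDerivAt (fun x => sinh x * cosh x ^ (-(1 / 3) : ℝ))
      (cosh x ^ (-(1 / 3) : ℝ) * (2 * cosh x ^ 2 + 1) / (3 * cosh x)) x := by
  have hc := (cosh_pos x).ne'
  refine ((hasDerivAt_sinh x).fun_mul
    ((hasDerivAt_cosh x).rpow_const (Or.inl hc))).congr_deriv ?_
  rw [rpow_sub_one hc]
  field_simp
  linear_combination cosh_sq x

theorem self_lt_sinh_mul_cosh_rpow {x : ℝ} (hx : 0 < x) :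
    x < sinh x * cosh x ^ (-(1 / 3) : ℝ) := by
  have hderiv (y : ℝ) := (hasDerivAt_sinh_mul_cosh_rpow y).fun_sub (hasDerivAt_id' y)
  have hmono : StrictMonoOn (fun x => sinh x * cosh x ^ (-(1 / 3) : ℝ) - x) (Ici 0) := by
    refine strictMonoOn_of_deriv_pos (convex_Ici 0)
      (fun y _ => (hderiv y).continuousAt.continuousWithinAt) fun y hy => ?_
    rw [interior_Ici] at hy
    have hc : 1 < cosh y := one_lt_cosh.2 hy.ne'
    rw [(hderiv y).deriv, sub_pos, one_lt_div (by positivity)]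
    exact three_mul_lt_mul_two_mul_sq_add_one (rpow_pos_of_pos (cosh_pos y) _)
      (rpow_lt_one_of_one_lt_of_neg hc (by norm_num))
      (rpow_neg_one_third_pow_three (cosh_pos y).le)
  simpa using hmono self_mem_Ici hx.le hx

theorem pow_three_mul_cosh_lt_sinh_pow_three {x : ℝ} (hx : 0 < x) :
    x ^ 3 * cosh x < sinh x ^ 3 := by
  have h := pow_lt_pow_left₀ (self_lt_sinh_mul_cosh_rpow hx) hx.le three_ne_zero
  rwa [mul_pow, rpow_neg_one_third_pow_three (cosh_pos x).le, ← div_eq_mul_inv,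
    lt_div_iff₀ (cosh_pos x)] at h

theorem hasDerivAt_inv_sinh_sq_sub_inv_sq {x : ℝ} (hx : x ≠ 0) :
    HasDerivAt (fun x : ℝ => 1 / sinh x ^ 2 - 1 / x ^ 2)
      (2 / x ^ 3 - 2 * cosh x / sinh x ^ 3) x := by
  have hs : sinh x ≠ 0 := sinh_ne_zero.2 hx
  simp only [one_div]
  refine ((((hasDerivAt_sinh x).fun_pow 2).inv (pow_ne_zero 2 hs)).fun_sub
    ((hasDerivAt_pow 2 x).inv (pow_ne_zero 2 hx))).congr_deriv ?_
  field_simp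
  ring

/-- The function `φ(x) = 1/sinh² x - 1/x²` is strictly increasing on `(0, ∞)`. -/
theorem strictMonoOn_inv_sinh_sq_sub_inv_sq :
    StrictMonoOn (fun x : ℝ => 1 / Real.sinh x ^ 2 - 1 / x ^ 2) (Set.Ioi 0) := by
  refine strictMonoOn_of_deriv_pos (convex_Ioi 0)
    (fun x hx =>
      (hasDerivAt_inv_sinh_sq_sub_inv_sq (ne_of_gt hx)).continuousAt.continuousWithinAt)
    fun x hx => ?_
  rw [interior_Ioi] at hx
  have hs : 0 < sinh x := sinh_pos_iff.2 hx
  rw [(hasDerivAt_inv_sinh_sq_sub_inv_sq hx.ne').deriv, sub_pos,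
    div_lt_div_iff₀ (pow_pos hs 3) (pow_pos hx 3)]
  linarith [pow_three_mul_cosh_lt_sinh_pow_three hx]
end

section
/- Fix y > 0 and define p(t,x) := (e^{−t/2}/√(2πt)) · (sinh(y)/sinh(x)) · ( e^{−(x−y)²/(2t)} − e^{−(x+y)²/(2t)} ) for t > 0 and x > 0. Then p satisfies the backward Kolmogorov equation of the hyperbolic Bessel process of order 3: for all t > 0 and x > 0, ∂_t p(t,x) = (1/2) ∂_x² p(t,x) + coth(x) · ∂_x p(t,x), where coth(x) = cosh(x)/sinh(x). -/
/-! Write `p(t, x) = e^{-t/2} u(t, x) / sinh x` with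
`u(t, x) = sinh y · (q_t(x - y) - q_t(x + y))`, `q_t` the Gaussian heat kernel, so that `u` solves
the heat equation `∂ₜu = ½ ∂ₓ²u`. Since `½ sinh'' = ½ sinh`, conjugating by `sinh` turns
`½ ∂ₓ² - ½` into `½ ∂ₓ² + coth x ∂ₓ` (a Doob h-transform), which gives the equation for `p`. -/

open Real Filter Topology

noncomputable def heatKernel (t z : ℝ) : ℝ := exp (-z ^ 2 / (2 * t)) / sqrt (2 * π * t)

def SatisfiesHeatEquationAt (u : ℝ → ℝ → ℝ) (t x : ℝ) : Prop :=
  ∃ ut uxx : ℝ, ∃ ux : ℝ → ℝ, HasDerivAt (fun s => u s x) ut t ∧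
    (∀ᶠ z in 𝓝 x, HasDerivAt (u t) (ux z) z) ∧ HasDerivAt ux uxx x ∧ ut = uxx / 2

namespace SatisfiesHeatEquationAt

variable {u v : ℝ → ℝ → ℝ} {t x : ℝ}

theorem sub (hu : SatisfiesHeatEquationAt u t x) (hv : SatisfiesHeatEquationAt v t x) :
    SatisfiesHeatEquationAt (fun s w => u s w - v s w) t x := by
  obtain ⟨ut, uxx, ux, hut, hux, huxx, hu⟩ := hu
  obtain ⟨vt, vxx, vx, hvt, hvx, hvxx, hv⟩ := hv
  refine ⟨ut - vt, uxx - vxx, fun z => ux z - vx z, hut.sub hvt, ?_, huxx.sub hvxx,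
    by rw [hu, hv]; ring⟩
  filter_upwards [hux, hvx] with z hu hv using hu.sub hv

theorem const_mul (c : ℝ) (hu : SatisfiesHeatEquationAt u t x) :
    SatisfiesHeatEquationAt (fun s w => c * u s w) t x := by
  obtain ⟨ut, uxx, ux, hut, hux, huxx, hu⟩ := hu
  refine ⟨c * ut, c * uxx, fun z => c * ux z, hut.const_mul c, ?_, huxx.const_mul c,
    by rw [hu]; ring⟩
  filter_upwards [hux] with z hu using hu.const_mul c

theorem comp_sub_const (a : ℝ) (hu : SatisfiesHeatEquationAt u t (x - a)) :
    SatisfiesHeatEquationAt (fun s w => u s (w - a)) t x := by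
  obtain ⟨ut, uxx, ux, hut, hux, huxx, hu⟩ := hu
  refine ⟨ut, uxx, fun z => ux (z - a), hut, ?_, huxx.comp_sub_const x a, hu⟩
  filter_upwards [(continuous_sub_right a).continuousAt.eventually hux] with z hz
  using hz.comp_sub_const z a

end SatisfiesHeatEquationAt

theorem hasDerivAt_heatKernel_space (t z : ℝ) :
    HasDerivAt (heatKernel t) (-z / t * heatKernel t z) z := by
  have := ((((hasDerivAt_id' z).pow 2).neg.div_const (2 * t)).exp).div_const (sqrt (2 * π * t))
  refine this.congr_deriv ?_
  simp only [heatKernel, Pi.pow_apply, Pi.neg_apply]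
  field_simp
  ring

theorem hasDerivAt_deriv_heatKernel_space (t z : ℝ) :
    HasDerivAt (fun w => -w / t * heatKernel t w) ((z ^ 2 / t ^ 2 - 1 / t) * heatKernel t z) z := by
  refine (((hasDerivAt_id' z).neg.div_const t).mul
    (hasDerivAt_heatKernel_space t z)).congr_deriv ?_
  simp only [Pi.neg_apply]
  ring

theorem hasDerivAt_heatKernel_time {t : ℝ} (ht : 0 < t) (z : ℝ) :
    HasDerivAt (fun s => heatKernel s z) ((z ^ 2 / t ^ 2 - 1 / t) / 2 * heatKernel t z) t := by
  have := ((hasDerivAt_const t (-z ^ 2)).div ((hasDerivAt_id' t).const_mul 2)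
    (by positivity)).exp.div (((hasDerivAt_id' t).const_mul (2 * π)).sqrt (by positivity))
      (by positivity)
  refine this.congr_deriv ?_
  simp only [heatKernel, Pi.div_apply]
  field_simp
  rw [sq_sqrt (by positivity)]
  ring

theorem satisfiesHeatEquationAt_heatKernel {t : ℝ} (ht : 0 < t) (x : ℝ) :
    SatisfiesHeatEquationAt heatKernel t x :=
  ⟨_, _, _, hasDerivAt_heatKernel_time ht x, .of_forall (hasDerivAt_heatKernel_space t),
    hasDerivAt_deriv_heatKernel_space t x, by ring⟩

theorem SatisfiesHeatEquationAt.backward_kolmogorov {u v : ℝ → ℝ → ℝ} {t x : ℝ} (hx : x ≠ 0)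
    (hu : SatisfiesHeatEquationAt u t x)
    (hv : ∀ s w, v s w = exp (-s / 2) * u s w / sinh w) :
    deriv (fun s => v s x) t =
      1 / 2 * deriv (fun z => deriv (fun w => v t w) z) x +
        cosh x / sinh x * deriv (fun z => v t z) x := by
  obtain ⟨ut, uxx, ux, hut, hux, huxx, heat⟩ := hu
  simp only [hv]
  have hsx : sinh x ≠ 0 := sinh_ne_zero.2 hx
  set vx : ℝ → ℝ := fun z => exp (-t / 2) * ((ux z * sinh z - u t z * cosh z) / sinh z ^ 2)
  have hvx : ∀ᶠ z in 𝓝 x, HasDerivAt (fun w => exp (-t / 2) * u t w / sinh w) (vx z) z := by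
    filter_upwards [hux, eventually_ne_nhds hx] with z hz hz0
    refine ((hz.const_mul _).div (hasDerivAt_sinh z) (sinh_ne_zero.2 hz0)).congr_deriv ?_
    ring
  have hvt : HasDerivAt (fun s => exp (-s / 2) * u s x / sinh x) _ t :=
    (((hasDerivAt_neg t).div_const 2).exp.mul hut).div_const (sinh x)
  have hvxx : HasDerivAt vx _ x :=
    (((huxx.mul (hasDerivAt_sinh x)).sub (hux.self_of_nhds.mul (hasDerivAt_cosh x))).div
      ((hasDerivAt_sinh x).pow 2) (pow_ne_zero 2 hsx)).const_mul (exp (-t / 2))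
  rw [hvt.deriv, hvx.self_of_nhds.deriv, EventuallyEq.deriv_eq (hvx.mono fun z hz => hz.deriv),
    hvxx.deriv, heat]
  simp only [vx, Pi.mul_apply, Pi.sub_apply, Pi.pow_apply]
  field_simp
  ring

theorem hyperbolic_bessel3_backward_kolmogorov_general (y : ℝ) (p : ℝ → ℝ → ℝ)
    (hp : ∀ t x : ℝ, p t x =
      (Real.exp (-t / 2) / Real.sqrt (2 * Real.pi * t)) * (Real.sinh y / Real.sinh x) *
        (Real.exp (-(x - y) ^ 2 / (2 * t)) - Real.exp (-(x + y) ^ 2 / (2 * t)))) :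
    ∀ t x : ℝ, 0 < t → 0 < x →
      deriv (fun s => p s x) t =
        (1 / 2) * deriv (fun z => deriv (fun w => p t w) z) x +
          (Real.cosh x / Real.sinh x) * deriv (fun z => p t z) x := by
  intro t x ht hx
  have heat : SatisfiesHeatEquationAt
      (fun s w => sinh y * (heatKernel s (w - y) - heatKernel s (w - -y))) t x :=
    (((satisfiesHeatEquationAt_heatKernel ht _).comp_sub_const y).sub
      ((satisfiesHeatEquationAt_heatKernel ht _).comp_sub_const (-y))).const_mul _
  refine heat.backward_kolmogorov hx.ne' fun s w => ?_
  rw [hp, heatKernel, heatKernel, sub_neg_eq_add]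
  ring

/-- For fixed `y > 0`, the transition density
`p(t,x) = (e^{-t/2}/√(2πt)) (sinh y / sinh x)(e^{-(x-y)²/(2t)} - e^{-(x+y)²/(2t)})`
of the hyperbolic Bessel process of order `3` satisfies the backward Kolmogorov equation
`∂_t p = (1/2) ∂_x² p + coth x · ∂_x p` for all `t > 0`, `x > 0`. -/
theorem hyperbolic_bessel3_backward_kolmogorov (y : ℝ) (hy : 0 < y) (p : ℝ → ℝ → ℝ)
    (hp : ∀ t x : ℝ, p t x =
      (Real.exp (-t / 2) / Real.sqrt (2 * Real.pi * t)) * (Real.sinh y / Real.sinh x) *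
        (Real.exp (-(x - y) ^ 2 / (2 * t)) - Real.exp (-(x + y) ^ 2 / (2 * t)))) :
    ∀ t x : ℝ, 0 < t → 0 < x →
      deriv (fun s => p s x) t =
        (1 / 2) * deriv (fun z => deriv (fun w => p t w) z) x +
          (Real.cosh x / Real.sinh x) * deriv (fun z => p t z) x :=
  hyperbolic_bessel3_backward_kolmogorov_general y p hp
end

section
/- For every t > 0 and x > 0, ∫₀^∞ (e^{−t/2}/√(2πt)) · (sinh(y)/sinh(x)) · ( e^{−(x−y)²/(2t)} − e^{−(x+y)²/(2t)} ) dy = 1. -/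
open Real MeasureTheory ProbabilityTheory Set
open scoped NNReal

/-! With `g` the density of `N(x, t)` and `h = g · sinh`, the integrand is
`e^{-t/2} / sinh x · (h y + h (-y))`, since `g (-y)` is the Gaussian kernel at `x + y`.
Folding `(0, ∞)` onto `ℝ` turns the integral into `e^{-t/2} / sinh x · E[sinh N(x, t)]`, and the
Gaussian moment generating function gives `E[sinh N(x, t)] = sinh x · e^{t/2}`. -/

-- The slopes `±1` are explicit so that the terms match the moment generating function `exp (s * y)`.
lemma sinh_eq_exp_mul_sub_exp_mul (y : ℝ) : sinh y = (exp (1 * y) - exp (-1 * y)) / 2 := by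
  rw [sinh_eq, one_mul, neg_one_mul]

theorem integral_Ioi_add_comp_neg {E : Type*} [NormedAddCommGroup E] [NormedSpace ℝ E]
    {f : ℝ → E} (hf : Integrable f) :
    ∫ y in Ioi 0, (f y + f (-y)) = ∫ y, f y := by
  rw [integral_add hf.integrableOn hf.comp_neg.integrableOn, integral_comp_neg_Ioi, neg_zero,
    add_comm, intervalIntegral.integral_Iic_add_Ioi hf.integrableOn hf.integrableOn]

namespace ProbabilityTheory

variable {μ : ℝ} {v : ℝ≥0}

lemma integrable_gaussianPDFReal_smul {E : Type*} [NormedAddCommGroup E] [NormedSpace ℝ E]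
    {f : ℝ → E} (hv : v ≠ 0) (hf : Integrable f (gaussianReal μ v)) :
    Integrable (fun y ↦ gaussianPDFReal μ v y • f y) := by
  rw [gaussianReal_of_var_ne_zero _ hv, integrable_withDensity_iff_integrable_smul'
    (measurable_gaussianPDF _ _) (ae_of_all _ fun _ ↦ gaussianPDF_lt_top)] at hf
  simpa only [toReal_gaussianPDF] using hf

lemma integrable_sinh_gaussianReal : Integrable sinh (gaussianReal μ v) := by
  simp_rw [funext sinh_eq_exp_mul_sub_exp_mul]
  exact ((integrable_exp_mul_gaussianReal 1).sub (integrable_exp_mul_gaussianReal (-1))).div_const 2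

lemma integral_sinh_gaussianReal : ∫ y, sinh y ∂gaussianReal μ v = sinh μ * exp (v / 2) := by
  have hmgf (s : ℝ) : ∫ y, exp (s * y) ∂gaussianReal μ v = exp (μ * s + v * s ^ 2 / 2) :=
    congrFun mgf_fun_id_gaussianReal s
  simp_rw [sinh_eq_exp_mul_sub_exp_mul]
  rw [integral_div, integral_sub (integrable_exp_mul_gaussianReal 1)
    (integrable_exp_mul_gaussianReal (-1)), hmgf, hmgf, div_mul_eq_mul_div, sub_mul,
    ← exp_add, ← exp_add]
  congr 3 <;> ring

end ProbabilityTheory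

/-- The transition density of the hyperbolic Bessel process of order `3` integrates to
`1` in the forward variable. -/
theorem hyperbolic_bessel3_density_integral_eq_one (t x : ℝ) (ht : 0 < t) (hx : 0 < x) :
    ∫ y in Set.Ioi (0 : ℝ),
        (Real.exp (-t / 2) / Real.sqrt (2 * Real.pi * t)) * (Real.sinh y / Real.sinh x) *
          (Real.exp (-(x - y) ^ 2 / (2 * t)) - Real.exp (-(x + y) ^ 2 / (2 * t))) = 1 := by
  set v : ℝ≥0 := ⟨t, ht.le⟩
  have hvt : (v : ℝ) = t := rfl
  have hv : v ≠ 0 := ne_of_gt ht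
  set h : ℝ → ℝ := fun y ↦ gaussianPDFReal x v y • sinh y
  have hdensity (y : ℝ) : (exp (-t / 2) / √(2 * π * t)) * (sinh y / sinh x) *
      (exp (-(x - y) ^ 2 / (2 * t)) - exp (-(x + y) ^ 2 / (2 * t)))
      = exp (-t / 2) / sinh x * (h y + h (-y)) := by
    simp only [h, gaussianPDFReal, smul_eq_mul, sinh_neg, hvt]
    rw [show (-y - x) ^ 2 = (x + y) ^ 2 by ring, show (y - x) ^ 2 = (x - y) ^ 2 by ring]
    ring
  have hint : ∫ y, h y = sinh x * exp (t / 2) := by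
    rw [← integral_gaussianReal_eq_integral_smul hv, integral_sinh_gaussianReal, hvt]
  simp_rw [hdensity]
  rw [integral_const_mul, integral_Ioi_add_comp_neg
    (integrable_gaussianPDFReal_smul hv integrable_sinh_gaussianReal),
    hint, div_mul_eq_mul_div, mul_left_comm, mul_div_cancel_left₀ _ (sinh_pos_iff.mpr hx).ne',
    ← exp_add, neg_div, neg_add_cancel, exp_zero]
end
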